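/- In Maker-Breaker Incidence, the small-path values are: Ls(P_1)=0, Ls(P_2)=0, Ls(P_3)=1, Ls(P_4)=1, Ls(P_5)=1, Ls(P_6)=1, Ls(P_7)=1, and Rs(P_1)=Rs(P_2)=Rs(P_3)=Rs(P_4)=Rs(P_5)=0, Rs(P_6)=Rs(P_7)=1. -/

import Mathlib

/-- Minimax value of a scoring positional game: players alternately claim
unclaimed vertices (`turn = true` means Left/Maker to move); when all vertices
are claimed the value is given by `score VL VR`. Left maximizes, Right minimizes. -/
noncomputable def gameValue {V : Type} [Fintype V] [DecidableEq V]
    (score : Finset V → Finset V → ℤ) :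
    Bool → Finset V → Finset V → ℤ := fun turn VL VR =>
  if h : (VL ∪ VR)ᶜ = (∅ : Finset V) then score VL VR
  else
    have hne : ((VL ∪ VR)ᶜ).attach.Nonempty :=
      Finset.attach_nonempty_iff.mpr (Finset.nonempty_iff_ne_empty.mpr h)
    if turn then
      ((VL ∪ VR)ᶜ).attach.sup' hne (fun v => gameValue score false (insert v.1 VL) VR)
    else
      ((VL ∪ VR)ᶜ).attach.inf' hne (fun v => gameValue score true VL (insert v.1 VR))
termination_by turn VL VR => ((VL ∪ VR)ᶜ).card
decreasing_by
  · rw [Finset.insert_union, Finset.compl_insert]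
    exact Finset.card_erase_lt_of_mem v.2
  · rw [Finset.union_insert, Finset.compl_insert]
    exact Finset.card_erase_lt_of_mem v.2

/-- Maker-Breaker Incidence final score: number of edges of `G` both of whose
endpoints belong to Left's (Maker's) set. -/
noncomputable def mbScore {V : Type} [Fintype V] [DecidableEq V]
    (G : SimpleGraph V) (VL : Finset V) (_ : Finset V) : ℤ :=
  ({e ∈ G.edgeSet | ∀ w ∈ e, w ∈ VL} : Set (Sym2 V)).ncard

/-- Maker-Maker Incidence final score: Left's edges minus Right's edges. -/
noncomputable def mmScore {V : Type} [Fintype V] [DecidableEq V]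
    (G : SimpleGraph V) (VL VR : Finset V) : ℤ :=
  (({e ∈ G.edgeSet | ∀ w ∈ e, w ∈ VL} : Set (Sym2 V)).ncard : ℤ)
    - (({e ∈ G.edgeSet | ∀ w ∈ e, w ∈ VR} : Set (Sym2 V)).ncard : ℤ)

noncomputable def LsMB {V : Type} [Fintype V] [DecidableEq V] (G : SimpleGraph V) : ℤ :=
  gameValue (mbScore G) true ∅ ∅

noncomputable def RsMB {V : Type} [Fintype V] [DecidableEq V] (G : SimpleGraph V) : ℤ :=
  gameValue (mbScore G) false ∅ ∅

noncomputable def LsMM {V : Type} [Fintype V] [DecidableEq V] (G : SimpleGraph V) : ℤ :=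
  gameValue (mmScore G) true ∅ ∅

noncomputable def RsMM {V : Type} [Fintype V] [DecidableEq V] (G : SimpleGraph V) : ℤ :=
  gameValue (mmScore G) false ∅ ∅

/-- Maker-Breaker final score on a hypergraph with edge set `E`. -/
def mbScoreH {V : Type} [Fintype V] [DecidableEq V]
    (E : Finset (Finset V)) (VL : Finset V) (_ : Finset V) : ℤ :=
  ((E.filter (fun e => e ⊆ VL)).card : ℤ)

/-- Maker-Maker final score on a hypergraph with edge set `E`. -/
def mmScoreH {V : Type} [Fintype V] [DecidableEq V]
    (E : Finset (Finset V)) (VL VR : Finset V) : ℤ :=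
  ((E.filter (fun e => e ⊆ VL)).card : ℤ) - ((E.filter (fun e => e ⊆ VR)).card : ℤ)


/-! Each value is a finite minimax computation. The well-founded recursion `gameValue` agrees with
a minimax that enumerates the free vertices as a duplicate-free list and recurses structurally on a
fuel parameter; the kernel can evaluate the latter, and on paths with at most seven vertices the
whole game tree is small enough for `decide`. -/

open Finset

theorem List.foldr_max_le_iff {α : Type*} [LinearOrder α] {l : List α} {x b : α} :
    l.foldr max x ≤ b ↔ x ≤ b ∧ ∀ y ∈ l, y ≤ b := by
  induction l <;> simp_all [and_left_comm]

theorem List.le_foldr_min_iff {α : Type*} [LinearOrder α] {l : List α} {x b : α} :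
    b ≤ l.foldr min x ↔ b ≤ x ∧ ∀ y ∈ l, b ≤ y := by
  induction l <;> simp_all [and_left_comm]

theorem List.Nodup.toFinset_erase {α : Type*} [DecidableEq α] {l : List α} (hl : l.Nodup)
    (a : α) : (l.erase a).toFinset = l.toFinset.erase a := by
  ext; simp [hl.mem_erase_iff]

section GameValue

variable {V : Type} [Fintype V] [DecidableEq V] {score : Finset V → Finset V → ℤ}
  {VL VR : Finset V}

theorem gameValue_of_compl_eq_empty (turn : Bool) (h : (VL ∪ VR)ᶜ = ∅) :
    gameValue score turn VL VR = score VL VR := by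
  rw [gameValue, dif_pos h]

theorem gameValue_true_le_iff (h : (VL ∪ VR)ᶜ ≠ ∅) {b : ℤ} :
    gameValue score true VL VR ≤ b ↔
      ∀ v ∈ (VL ∪ VR)ᶜ, gameValue score false (insert v VL) VR ≤ b := by
  rw [gameValue, dif_neg h]
  simp [sup'_le_iff]

theorem le_gameValue_false_iff (h : (VL ∪ VR)ᶜ ≠ ∅) {b : ℤ} :
    b ≤ gameValue score false VL VR ↔
      ∀ v ∈ (VL ∪ VR)ᶜ, b ≤ gameValue score true VL (insert v VR) := by
  rw [gameValue, dif_neg h]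
  simp [le_inf'_iff]

end GameValue

section ListGameValue

variable {V : Type} [DecidableEq V] (score : Finset V → Finset V → ℤ)

/-- The move to the head of `free` seeds the fold, so no value is needed for an empty max or min. -/
def listGameValue : ℕ → Bool → List V → Finset V → Finset V → ℤ
  | fuel + 1, true, v :: vs, VL, VR =>
    (vs.map fun w => listGameValue fuel false ((v :: vs).erase w) (insert w VL) VR).foldr max
      (listGameValue fuel false vs (insert v VL) VR)
  | fuel + 1, false, v :: vs, VL, VR =>
    (vs.map fun w => listGameValue fuel true ((v :: vs).erase w) VL (insert w VR)).foldr min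
      (listGameValue fuel true vs VL (insert v VR))
  | _, _, _, VL, VR => score VL VR

variable {score}

theorem listGameValue_nil (fuel : ℕ) (turn : Bool) (VL VR : Finset V) :
    listGameValue score fuel turn [] VL VR = score VL VR := by
  cases fuel <;> cases turn <;> rfl

theorem listGameValue_true_le_iff {fuel : ℕ} {v : V} {vs : List V} {VL VR : Finset V} {b : ℤ} :
    listGameValue score (fuel + 1) true (v :: vs) VL VR ≤ b ↔
      ∀ w ∈ v :: vs,
        listGameValue score fuel false ((v :: vs).erase w) (insert w VL) VR ≤ b := by
  simp [listGameValue, List.foldr_max_le_iff]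

theorem le_listGameValue_false_iff {fuel : ℕ} {v : V} {vs : List V} {VL VR : Finset V} {b : ℤ} :
    b ≤ listGameValue score (fuel + 1) false (v :: vs) VL VR ↔
      ∀ w ∈ v :: vs,
        b ≤ listGameValue score fuel true ((v :: vs).erase w) VL (insert w VR) := by
  simp [listGameValue, List.le_foldr_min_iff]

theorem listGameValue_eq_gameValue [Fintype V] {fuel : ℕ} {turn : Bool} {free : List V}
    {VL VR : Finset V} (hnodup : free.Nodup) (hfree : free.toFinset = (VL ∪ VR)ᶜ)
    (hfuel : free.length ≤ fuel) :
    listGameValue score fuel turn free VL VR = gameValue score turn VL VR := by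
  induction fuel generalizing turn free VL VR with
  | zero =>
    rw [List.length_eq_zero_iff.mp (Nat.le_zero.mp hfuel)] at hfree ⊢
    rw [listGameValue_nil, gameValue_of_compl_eq_empty _ hfree.symm]
  | succ fuel ih =>
    obtain _ | ⟨v, vs⟩ := free
    · rw [listGameValue_nil, gameValue_of_compl_eq_empty _ hfree.symm]
    have hne : (VL ∪ VR)ᶜ ≠ ∅ := by simp [← hfree]
    have hmove {w : V} (hw : w ∈ v :: vs) {VL' VR' : Finset V} (turn' : Bool)
        (h : (VL' ∪ VR')ᶜ = (VL ∪ VR)ᶜ.erase w) :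
        listGameValue score fuel turn' ((v :: vs).erase w) VL' VR' =
          gameValue score turn' VL' VR' := by
      refine ih (hnodup.erase w) ?_ ?_
      · rw [hnodup.toFinset_erase, hfree, h]
      · rw [List.length_erase_of_mem hw]; omega
    cases turn
    · refine eq_of_forall_le_iff fun b => ?_
      rw [le_listGameValue_false_iff, le_gameValue_false_iff hne, ← hfree]
      simp only [List.mem_toFinset]
      refine forall₂_congr fun w hw => ?_
      rw [hmove hw true (by rw [union_insert, compl_insert])]
    · refine eq_of_forall_ge_iff fun b => ?_
      rw [listGameValue_true_le_iff, gameValue_true_le_iff hne, ← hfree]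
      simp only [List.mem_toFinset]
      refine forall₂_congr fun w hw => ?_
      rw [hmove hw false (by rw [insert_union, compl_insert])]

end ListGameValue

theorem mbScore_eq_card_filter {V : Type} [Fintype V] [DecidableEq V] (G : SimpleGraph V)
    [DecidableRel G.Adj] (VL VR : Finset V) :
    mbScore G VL VR = #{e ∈ G.edgeFinset | ∀ w ∈ e, w ∈ VL} := by
  rw [mbScore, ← Set.ncard_coe_finset]
  congr 2
  ext
  simp

section Enumeration

variable {V : Type} [Fintype V] [DecidableEq V] (G : SimpleGraph V) [DecidableRel G.Adj]
  {l : List V}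

theorem LsMB_eq_listGameValue (hl : l.Nodup) (hmem : ∀ v, v ∈ l) :
    LsMB G = listGameValue (fun VL _ => #{e ∈ G.edgeFinset | ∀ w ∈ e, w ∈ VL})
      l.length true l ∅ ∅ := by
  rw [listGameValue_eq_gameValue hl (by ext; simp [hmem]) le_rfl, LsMB]
  congr 1
  ext VL VR
  exact mbScore_eq_card_filter G VL VR

theorem RsMB_eq_listGameValue (hl : l.Nodup) (hmem : ∀ v, v ∈ l) :
    RsMB G = listGameValue (fun VL _ => #{e ∈ G.edgeFinset | ∀ w ∈ e, w ∈ VL})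
      l.length false l ∅ ∅ := by
  rw [listGameValue_eq_gameValue hl (by ext; simp [hmem]) le_rfl, RsMB]
  congr 1
  ext VL VR
  exact mbScore_eq_card_filter G VL VR

end Enumeration

instance (n : ℕ) : DecidableRel (SimpleGraph.pathGraph n).Adj := fun _ _ =>
  decidable_of_iff _ SimpleGraph.pathGraph_adj.symm

/-- Maker-Breaker Incidence values on short paths. -/
theorem makerBreaker_incidence_small_paths :
    LsMB (SimpleGraph.pathGraph 1) = 0 ∧ LsMB (SimpleGraph.pathGraph 2) = 0 ∧
    LsMB (SimpleGraph.pathGraph 3) = 1 ∧ LsMB (SimpleGraph.pathGraph 4) = 1 ∧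
    LsMB (SimpleGraph.pathGraph 5) = 1 ∧ LsMB (SimpleGraph.pathGraph 6) = 1 ∧
    LsMB (SimpleGraph.pathGraph 7) = 1 ∧
    RsMB (SimpleGraph.pathGraph 1) = 0 ∧ RsMB (SimpleGraph.pathGraph 2) = 0 ∧
    RsMB (SimpleGraph.pathGraph 3) = 0 ∧ RsMB (SimpleGraph.pathGraph 4) = 0 ∧
    RsMB (SimpleGraph.pathGraph 5) = 0 ∧ RsMB (SimpleGraph.pathGraph 6) = 1 ∧
    RsMB (SimpleGraph.pathGraph 7) = 1 := by
  simp only [LsMB_eq_listGameValue _ (List.nodup_finRange _) List.mem_finRange,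
    RsMB_eq_listGameValue _ (List.nodup_finRange _) List.mem_finRange]
  decide +kernel
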